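/- Let τ₀ : ℝ² → (0,∞) and Q₀ : ℝ² → ℂ_I be smooth, and let g : ℝ² → L be a smooth solution of the g-system ∂_z g = (∂_z(log √τ₀))·g + (Q₀/√τ₀)·J·ĝ·I, ∂_z̄ g = (√τ₀/4)·J·ĝ·I, with |g|² nowhere vanishing. For a constant θ ∈ ℝ, the map e^{iθ}·g (multiplication by the central complex scalar e^{iθ}) satisfies the same g-system if and only if e^{2iθ} = 1, i.e. e^{iθ} = ±1. (Hence a solution of the g-system with prescribed hyperbolic Gauss map and Weierstrass data is determined up to sign.) -/

import Mathlib

/-!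
`ℍ^ℂ` is modelled as `Quaternion ℂ` (complex coefficients on `1, I, J, K`, central complex
unit `i = Complex.I`, `I² = J² = K² = −1`, `I*J = K = −J*I`).  Maps on `ℝ²` are taken on
`ℝ × ℝ`; smoothness and the partial derivatives `∂ₓ`, `∂_y` are meant coefficientwise, and
`qdz f = (1/2)(∂ₓ f − I·∂_y f)`, `qdzbar f = (1/2)(∂ₓ f + I·∂_y f)` (left multiplication
by the quaternion `I`).  `cI` embeds `ℂ` as `ℂ_I = ℝ·1 ⊕ ℝ·I ⊂ ℍ^ℂ`.
-/

noncomputable section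

/-- The quaternion `I`. -/
def Iq : Quaternion ℂ := ⟨0, 1, 0, 0⟩

/-- The quaternion `J`. -/
def Jq : Quaternion ℂ := ⟨0, 0, 1, 0⟩

/-- Coefficientwise complex conjugation `â` on the complex quaternions. -/
def qhat (a : Quaternion ℂ) : Quaternion ℂ :=
  ⟨starRingEnd ℂ a.re, starRingEnd ℂ a.imI, starRingEnd ℂ a.imJ, starRingEnd ℂ a.imK⟩

/-- The embedding of `ℂ` onto `ℂ_I = ℝ·1 ⊕ ℝ·I ⊂ ℍ^ℂ`, sending the complex unit to `I`. -/
def cI (w : ℂ) : Quaternion ℂ := ⟨((w.re : ℝ) : ℂ), ((w.im : ℝ) : ℂ), 0, 0⟩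

/-- The coefficientwise directional derivative of an `ℍ^ℂ`-valued map on `ℝ²`. -/
def qpd (v : ℝ × ℝ) (f : ℝ × ℝ → Quaternion ℂ) (p : ℝ × ℝ) : Quaternion ℂ :=
  ⟨fderiv ℝ (fun s => (f s).re) p v, fderiv ℝ (fun s => (f s).imI) p v,
   fderiv ℝ (fun s => (f s).imJ) p v, fderiv ℝ (fun s => (f s).imK) p v⟩

/-- `∂_z f := (1/2)(∂ₓ f − I·∂_y f)`, with `I·` the left multiplication by `I` in `ℍ^ℂ`. -/
def qdz (f : ℝ × ℝ → Quaternion ℂ) (p : ℝ × ℝ) : Quaternion ℂ :=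
  (2 : ℂ)⁻¹ • (qpd (1, 0) f p - Iq * qpd (0, 1) f p)

/-- `∂_z̄ f := (1/2)(∂ₓ f + I·∂_y f)`. -/
def qdzbar (f : ℝ × ℝ → Quaternion ℂ) (p : ℝ × ℝ) : Quaternion ℂ :=
  (2 : ℂ)⁻¹ • (qpd (1, 0) f p + Iq * qpd (0, 1) f p)

/-- Smoothness (coefficientwise) of an `ℍ^ℂ`-valued map on `ℝ²`. -/
def QSmooth (f : ℝ × ℝ → Quaternion ℂ) : Prop :=
  ContDiff ℝ (⊤ : ℕ∞) (fun p => (f p).re) ∧ ContDiff ℝ (⊤ : ℕ∞) (fun p => (f p).imI) ∧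
  ContDiff ℝ (⊤ : ℕ∞) (fun p => (f p).imJ) ∧ ContDiff ℝ (⊤ : ℕ∞) (fun p => (f p).imK)

/-- The real-valued function `r`, regarded as `ℂ_I`-valued (i.e. `ℍ^ℂ`-valued). -/
def rQ (r : ℝ) : Quaternion ℂ := ⟨((r : ℝ) : ℂ), 0, 0, 0⟩

/-- `L := {(1/2)(1+iI)(a+bJ) : a, b ∈ ℂ} ⊂ ℍ^ℂ`. -/
def Lset : Set (Quaternion ℂ) :=
  {g | ∃ a b : ℂ, g = (2 : ℂ)⁻¹ •
    ((⟨1, Complex.I, 0, 0⟩ : Quaternion ℂ) * (⟨a, 0, b, 0⟩ : Quaternion ℂ))}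

/-- For `g = (1/2)(1+iI)(a+bJ) ∈ L` (so that `a = 2·g.re`, `b = 2·g.imJ`), the squared norm
`|g|² := |a|² − |b|²`. -/
def LnormSq (g : Quaternion ℂ) : ℝ :=
  Complex.normSq (2 * g.re) - Complex.normSq (2 * g.imJ)

/-- The `g`-system: `∂_z g = (∂_z log √τ₀)·g + (Q₀/√τ₀)·J·ĝ·I` and
`∂_z̄ g = (√τ₀/4)·J·ĝ·I`, with the `ℂ_I`-valued Weierstrass data `(Q₀, τ₀)`. -/
def GSystem (τ₀ : ℝ × ℝ → ℝ) (Q₀ : ℝ × ℝ → ℂ) (g : ℝ × ℝ → Quaternion ℂ) : Prop :=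
  ∀ p : ℝ × ℝ,
    qdz g p = qdz (fun s => rQ (Real.log (Real.sqrt (τ₀ s)))) p * g p
        + (Real.sqrt (τ₀ p))⁻¹ • (cI (Q₀ p) * (Jq * qhat (g p) * Iq)) ∧
    qdzbar g p = (Real.sqrt (τ₀ p) / 4) • (Jq * qhat (g p) * Iq)

/-!
Multiplication by a constant `c ∈ ℂ` commutes with `∂_z` and `∂_z̄`, while `â` turns `c` into
`c̄` on the right-hand sides of the `g`-system. Hence `c • g` is again a solution as soon as
`c̄ = c`; conversely, the `∂_z̄`-equation at a point where `g ≠ 0` gives `c • B = c̄ • B` with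
`B = (√τ₀/4) J ĝ I ≠ 0`, since `x ↦ J x̂ I` is injective. For `c = e^{iθ}` we have
`c̄ = c⁻¹`, so `c̄ = c` means `e^{2iθ} = c² = 1`.
-/

-- Not found by instance search: `Quaternion.instSMul` is not reducibly the `SMul` of
-- `Quaternion.algebra`.
instance : SMulCommClass ℂ (Quaternion ℂ) (Quaternion ℂ) :=
  ⟨fun c x y => (Algebra.mul_smul_comm c x y).symm⟩

instance : IsScalarTower ℂ (Quaternion ℂ) (Quaternion ℂ) :=
  ⟨fun c x y => Algebra.smul_mul_assoc c x y⟩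

lemma Jq_mul_mul_Iq (x : Quaternion ℂ) :
    Jq * x * Iq = (⟨-x.imK, -x.imJ, -x.imI, -x.re⟩ : Quaternion ℂ) := by
  ext <;> simp [Quaternion.re_mul, Quaternion.imI_mul, Quaternion.imJ_mul, Quaternion.imK_mul] <;>
    simp [Jq, Iq]

lemma Jq_mul_mul_Iq_eq_zero_iff {x : Quaternion ℂ} : Jq * x * Iq = 0 ↔ x = 0 := by
  refine ⟨fun h => ?_, fun h => by simp [h]⟩
  obtain ⟨h₁, h₂, h₃, h₄⟩ := Quaternion.ext_iff.mp ((Jq_mul_mul_Iq x).symm.trans h)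
  ext <;> simp_all [Quaternion.re_zero, Quaternion.imI_zero, Quaternion.imJ_zero,
    Quaternion.imK_zero]

lemma qhat_qhat (x : Quaternion ℂ) : qhat (qhat x) = x := by
  ext <;> simp [qhat]

lemma qhat_zero : qhat 0 = 0 := by
  ext <;> simp [qhat, Quaternion.re_zero, Quaternion.imI_zero, Quaternion.imJ_zero,
    Quaternion.imK_zero]

lemma qhat_eq_zero_iff {x : Quaternion ℂ} : qhat x = 0 ↔ x = 0 :=
  ⟨fun h => by rw [← qhat_qhat x, h, qhat_zero], fun h => h ▸ qhat_zero⟩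

lemma qhat_smul (c : ℂ) (x : Quaternion ℂ) : qhat (c • x) = starRingEnd ℂ c • qhat x := by
  ext <;> simp [qhat, Quaternion.re_smul, Quaternion.imI_smul, Quaternion.imJ_smul,
    Quaternion.imK_smul] <;> rfl

lemma ne_zero_of_LnormSq_ne_zero {x : Quaternion ℂ} (hx : LnormSq x ≠ 0) : x ≠ 0 := by
  rintro rfl
  simp [LnormSq, Quaternion.re_zero, Quaternion.imJ_zero] at hx

lemma qpd_const_smul (c : ℂ) (v : ℝ × ℝ) (f : ℝ × ℝ → Quaternion ℂ) (p : ℝ × ℝ) :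
    qpd v (fun s => c • f s) p = c • qpd v f p := by
  ext <;> simp only [qpd, Quaternion.re_smul, Quaternion.imI_smul, Quaternion.imJ_smul,
    Quaternion.imK_smul] <;> rw [← Pi.smul_def, fderiv_const_smul_field] <;> rfl

lemma qdz_const_smul (c : ℂ) (f : ℝ × ℝ → Quaternion ℂ) (p : ℝ × ℝ) :
    qdz (fun s => c • f s) p = c • qdz f p := by
  simp only [qdz, qpd_const_smul, mul_smul_comm, smul_sub, smul_comm (2 : ℂ)⁻¹ c]

lemma qdzbar_const_smul (c : ℂ) (f : ℝ × ℝ → Quaternion ℂ) (p : ℝ × ℝ) :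
    qdzbar (fun s => c • f s) p = c • qdzbar f p := by
  simp only [qdzbar, qpd_const_smul, mul_smul_comm, smul_add, smul_comm (2 : ℂ)⁻¹ c]

section GSystem

variable {τ₀ : ℝ × ℝ → ℝ} {Q₀ : ℝ × ℝ → ℂ} {g : ℝ × ℝ → Quaternion ℂ}

lemma GSystem.const_smul_of_conj_eq (hsys : GSystem τ₀ Q₀ g) {c : ℂ}
    (hc : starRingEnd ℂ c = c) : GSystem τ₀ Q₀ (fun s => c • g s) := by
  intro p
  obtain ⟨hz, hzbar⟩ := hsys p
  constructor <;>
    simp only [qdz_const_smul, qdzbar_const_smul, hz, hzbar, qhat_smul, hc, mul_smul_comm,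
      smul_mul_assoc, smul_add, smul_comm c]

lemma GSystem.conj_eq_of_const_smul (hsys : GSystem τ₀ Q₀ g) {c : ℂ}
    (hcsys : GSystem τ₀ Q₀ (fun s => c • g s)) {p : ℝ × ℝ} (hτp : 0 < τ₀ p) (hgp : g p ≠ 0) :
    starRingEnd ℂ c = c := by
  have hzbar := (hcsys p).2
  rw [qdzbar_const_smul, (hsys p).2, qhat_smul, mul_smul_comm, smul_mul_assoc,
    smul_comm (Real.sqrt (τ₀ p) / 4) (starRingEnd ℂ c)] at hzbar
  have hB : (Real.sqrt (τ₀ p) / 4) • (Jq * qhat (g p) * Iq) ≠ 0 :=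
    smul_ne_zero (by positivity)
      (Jq_mul_mul_Iq_eq_zero_iff.not.mpr (qhat_eq_zero_iff.not.mpr hgp))
  exact (smul_left_injective ℂ hB hzbar).symm

lemma GSystem.const_smul_iff (hsys : GSystem τ₀ Q₀ g) {p : ℝ × ℝ} (hτp : 0 < τ₀ p)
    (hgp : g p ≠ 0) (c : ℂ) :
    GSystem τ₀ Q₀ (fun s => c • g s) ↔ starRingEnd ℂ c = c :=
  ⟨fun h => hsys.conj_eq_of_const_smul h hτp hgp, hsys.const_smul_of_conj_eq⟩

end GSystem

lemma Complex.exp_two_mul_mul_I (θ : ℂ) :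
    Complex.exp (2 * θ * Complex.I) =
      Complex.exp (θ * Complex.I) * Complex.exp (θ * Complex.I) := by
  rw [← Complex.exp_add]; ring_nf

lemma Complex.conj_exp_ofReal_mul_I_eq_self_iff (θ : ℝ) :
    starRingEnd ℂ (Complex.exp (θ * Complex.I)) = Complex.exp (θ * Complex.I) ↔
      Complex.exp (2 * θ * Complex.I) = 1 := by
  rw [← Complex.exp_conj, map_mul, Complex.conj_ofReal, Complex.conj_I, mul_neg, Complex.exp_neg,
    ← mul_eq_one_iff_inv_eq₀ (Complex.exp_ne_zero _), Complex.exp_two_mul_mul_I]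

theorem stmt12_general (τ₀ : ℝ × ℝ → ℝ) (Q₀ : ℝ × ℝ → ℂ)
    (hτpos : ∀ p, 0 < τ₀ p)
    (g : ℝ × ℝ → Quaternion ℂ)
    (hgnz : ∀ p, LnormSq (g p) ≠ 0) (hsys : GSystem τ₀ Q₀ g) (θ : ℝ) :
    (GSystem τ₀ Q₀ (fun p => Complex.exp ((θ : ℂ) * Complex.I) • g p) ↔
      Complex.exp (2 * (θ : ℂ) * Complex.I) = 1) ∧
    (Complex.exp (2 * (θ : ℂ) * Complex.I) = 1 ↔
      Complex.exp ((θ : ℂ) * Complex.I) = 1 ∨ Complex.exp ((θ : ℂ) * Complex.I) = -1) := by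
  rw [hsys.const_smul_iff (hτpos 0) (ne_zero_of_LnormSq_ne_zero (hgnz 0)),
    Complex.conj_exp_ofReal_mul_I_eq_self_iff, Complex.exp_two_mul_mul_I, mul_self_eq_one_iff]
  exact ⟨Iff.rfl, Iff.rfl⟩

/-- Let `g : ℝ² → L` be a smooth solution of the `g`-system with `|g|²`
nowhere vanishing, for smooth data `τ₀ : ℝ² → (0,∞)`, `Q₀ : ℝ² → ℂ_I`.  For a constant
`θ ∈ ℝ`, the map `e^{iθ}·g` satisfies the same `g`-system if and only if `e^{2iθ} = 1`,
i.e. `e^{iθ} = ±1`; hence a solution with prescribed hyperbolic Gauss map and Weierstrass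
data is determined up to sign. -/
theorem stmt12 (τ₀ : ℝ × ℝ → ℝ) (Q₀ : ℝ × ℝ → ℂ)
    (hτ : ContDiff ℝ (⊤ : ℕ∞) τ₀) (hτpos : ∀ p, 0 < τ₀ p)
    (hQ : ContDiff ℝ (⊤ : ℕ∞) Q₀)
    (g : ℝ × ℝ → Quaternion ℂ) (hgs : QSmooth g) (hgL : ∀ p, g p ∈ Lset)
    (hgnz : ∀ p, LnormSq (g p) ≠ 0) (hsys : GSystem τ₀ Q₀ g) (θ : ℝ) :
    (GSystem τ₀ Q₀ (fun p => Complex.exp ((θ : ℂ) * Complex.I) • g p) ↔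
      Complex.exp (2 * (θ : ℂ) * Complex.I) = 1) ∧
    (Complex.exp (2 * (θ : ℂ) * Complex.I) = 1 ↔
      Complex.exp ((θ : ℂ) * Complex.I) = 1 ∨ Complex.exp ((θ : ℂ) * Complex.I) = -1) :=
  stmt12_general τ₀ Q₀ hτpos g hgnz hsys θ
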